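/- Let Q = [0, π) × [0, π) and Q' = Q ∖ ([0, π/2) × [0, π/2)). There exists a measurable set W₁ ⊆ Q' ∪ (Q + (2π, 2π)) that is 2πℤ²-translation congruent to Q and 2-dilation congruent to Q'. Moreover, for any such W₁, letting W₂, W₃, W₄ be the images of W₁ under the maps (x, y) ↦ (−x, y), (x, y) ↦ (−x, −y), and (x, y) ↦ (x, −y) respectively, the set W₁ ∪ W₂ ∪ W₃ ∪ W₄ is a wavelet set in ℝ² for the dilation matrix 2I (this construction recovers the 'four corners set'). -/

import Mathlib

open MeasureTheory Set
open scoped Real symmDiff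

noncomputable section

/-- An a.e. (modulo Lebesgue-null sets) partition of the set `A ⊆ ℝ²` by the family `P`. -/
def IsAEPartition2 {ι : Type*} (P : ι → Set (ℝ × ℝ)) (A : Set (ℝ × ℝ)) : Prop :=
  volume (A ∆ (⋃ i, P i)) = 0 ∧ ∀ i j : ι, i ≠ j → volume (P i ∩ P j) = 0

/-- `A ⊆ ℝ²` is `2πℤ²`-translation congruent to `B`. -/
def TransCongruent2 (A B : Set (ℝ × ℝ)) : Prop :=
  ∃ P : ℤ × ℤ → Set (ℝ × ℝ), (∀ m, MeasurableSet (P m)) ∧ IsAEPartition2 P A ∧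
    IsAEPartition2
      (fun (m : ℤ × ℤ) =>
        (fun p : ℝ × ℝ => (p.1 + 2 * Real.pi * (m.1 : ℝ), p.2 + 2 * Real.pi * (m.2 : ℝ)))
          '' P m) B

/-- `A ⊆ ℝ²` is `2`-dilation congruent to `B`. -/
def DilCongruent2 (A B : Set (ℝ × ℝ)) : Prop :=
  ∃ P : ℤ → Set (ℝ × ℝ), (∀ k, MeasurableSet (P k)) ∧ IsAEPartition2 P A ∧
    IsAEPartition2
      (fun (k : ℤ) =>
        (fun p : ℝ × ℝ => ((2 : ℝ) ^ k * p.1, (2 : ℝ) ^ k * p.2)) '' P k) B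

/-- `W ⊆ ℝ²` is a wavelet set for the dilation matrix `2I`: its `2πℤ²`-translates and
its `2ℤ`-dilates each partition `ℝ²` modulo Lebesgue-null sets. -/
def IsWaveletSet2 (W : Set (ℝ × ℝ)) : Prop :=
  MeasurableSet W ∧
  (∀ᵐ p : ℝ × ℝ ∂volume, ∃! m : ℤ × ℤ,
    (p.1 + 2 * Real.pi * (m.1 : ℝ), p.2 + 2 * Real.pi * (m.2 : ℝ)) ∈ W) ∧
  (∀ᵐ p : ℝ × ℝ ∂volume, ∃! k : ℤ, ((2 : ℝ) ^ k * p.1, (2 : ℝ) ^ k * p.2) ∈ W)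

/-!
Put `a n = 2π/3 - (2π/3)/4ⁿ`, so that `a 0 = 0`, `a 1 = π/2` and `a (n+1) = (a n + 2π)/4`, and let
`T` be the union of the diagonal squares `[a n, a (n+1))²`. Then `W₁ = (Q \ T) ∪ (T + (2π, 2π))`
works: translating its second piece back by `(2π, 2π)` restores `Q`, while dilating it by `1/4`
gives the squares with `n ≥ 1`, which together with `Q \ T` make up `Q'`.

For the wavelet property, congruent sets tile alike almost everywhere: for a.e. `p`, the orbit of
`p` meets one of them exactly once iff it meets the other exactly once. The `2πℤ²`-orbit of `p`
meets `Q` exactly once iff both coordinates of `p` lie in `[0, π)` modulo `2π`, and the `2ℤ`-orbit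
meets `Q'` exactly once iff `p` lies in the open first quadrant. As `W₁` lies in both of these
invariant regions, a.e. orbit meets `W₁` at most once, and meets it iff `p` is in the region. Off a
null set exactly one of the four reflections of `p` lies in the region, so exactly one of the four
reflected copies of `W₁` is met, and only once.
-/

section Orbits

variable {ι X : Type*} {g : ι → X → X} {V V' : Set X} {p : X} {c c' : Prop}

def OrbitHitsIff (g : ι → X → X) (V : Set X) (p : X) (c : Prop) : Prop :=
  {j | g j p ∈ V}.Subsingleton ∧ ({j | g j p ∈ V}.Nonempty ↔ c)

lemma OrbitHitsIff.existsUnique (h : OrbitHitsIff g V p c) (hc : c) : ∃! j, g j p ∈ V := by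
  obtain ⟨j, hj⟩ := h.2.2 hc
  exact ⟨j, hj, fun i hi => h.1 hi hj⟩

lemma orbitHitsIff_of_existsUnique_iff (h : (∃! j, g j p ∈ V) ↔ c)
    (hV : (∃ j, g j p ∈ V) → c) : OrbitHitsIff g V p c :=
  ⟨fun i hi _ hj => (h.2 (hV ⟨i, hi⟩)).unique hi hj, hV, fun hc => (h.2 hc).exists⟩

lemma OrbitHitsIff.union (h : OrbitHitsIff g V p c) (h' : OrbitHitsIff g V' p c')
    (hcc' : ¬(c ∧ c')) : OrbitHitsIff g (V ∪ V') p (c ∨ c') := by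
  refine ⟨?_, fun ⟨j, hj⟩ => hj.imp (fun hj => h.2.1 ⟨j, hj⟩) (fun hj => h'.2.1 ⟨j, hj⟩),
    ?_⟩
  · rintro i (hi | hi) j (hj | hj)
    · exact h.1 hi hj
    · exact absurd ⟨h.2.1 ⟨i, hi⟩, h'.2.1 ⟨j, hj⟩⟩ hcc'
    · exact absurd ⟨h.2.1 ⟨j, hj⟩, h'.2.1 ⟨i, hi⟩⟩ hcc'
    · exact h'.1 hi hj
  · rintro (hc | hc)
    · obtain ⟨j, hj⟩ := h.2.2 hc
      exact ⟨j, Or.inl hj⟩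
    · obtain ⟨j, hj⟩ := h'.2.2 hc
      exact ⟨j, Or.inr hj⟩

lemma OrbitHitsIff.image {s : X → X} (hs : Function.Involutive s) (e : ι ≃ ι)
    (hsg : ∀ j q, s (g j q) = g (e j) (s q)) (h : OrbitHitsIff g V (s p) c) :
    OrbitHitsIff g (s '' V) p c := by
  have hmem : ∀ j, g j p ∈ s '' V ↔ g (e j) (s p) ∈ V := fun j => by
    rw [hs.image_eq_preimage_symm, mem_preimage, hsg]
  refine ⟨fun i hi j hj => e.injective (h.1 ((hmem i).1 hi) ((hmem j).1 hj)),
    Iff.trans ?_ h.2⟩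
  refine ⟨fun ⟨j, hj⟩ => ⟨e j, (hmem j).1 hj⟩, fun ⟨j, hj⟩ => ⟨e.symm j, ?_⟩⟩
  rwa [mem_ofPred_eq, hmem, e.apply_symm_apply]

end Orbits

lemma existsUnique_exists_iff_existsUnique_prod {α β : Type*} {R : α → β → Prop}
    (hR : ∀ a b b', R a b → R a b' → b = b') :
    (∃! a, ∃ b, R a b) ↔ ∃! q : α × β, R q.1 q.2 := by
  constructor
  · rintro ⟨a, ⟨b, hab⟩, ha⟩
    refine ⟨(a, b), hab, fun ⟨a', b'⟩ h => ?_⟩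
    obtain rfl : a' = a := ha a' ⟨b', h⟩
    rw [hR a' b' b h hab]
  · rintro ⟨⟨a, b⟩, hab, hq⟩
    exact ⟨a, ⟨b, hab⟩, fun a' ⟨b', h⟩ => congrArg Prod.fst (hq (a', b') h)⟩

lemma existsUnique_prod_and_iff {α β : Type*} {C₁ : α → Prop} {C₂ : β → Prop} :
    (∃! q : α × β, C₁ q.1 ∧ C₂ q.2) ↔ (∃! a, C₁ a) ∧ ∃! b, C₂ b := by
  constructor
  · rintro ⟨⟨a, b⟩, ⟨ha, hb⟩, hq⟩
    exact ⟨⟨a, ha, fun a' h => congrArg Prod.fst (hq (a', b) ⟨h, hb⟩)⟩,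
      ⟨b, hb, fun b' h => congrArg Prod.snd (hq (a, b') ⟨ha, h⟩)⟩⟩
  · rintro ⟨⟨a, ha, hau⟩, ⟨b, hb, hbu⟩⟩
    exact ⟨(a, b), ⟨ha, hb⟩, fun q hq => Prod.ext (hau q.1 hq.1) (hbu q.2 hq.2)⟩

lemma IsAEPartition2.ae_mem_iff {ι : Type*} [Countable ι] {P : ι → Set (ℝ × ℝ)}
    {A : Set (ℝ × ℝ)} (h : IsAEPartition2 P A) :
    ∀ᵐ x, (x ∈ A ↔ ∃ i, x ∈ P i) ∧ ∀ i j, x ∈ P i → x ∈ P j → i = j := by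
  have hA : ∀ᵐ x, x ∈ A ↔ x ∈ ⋃ i, P i :=
    Filter.eventuallyEq_set.mp (measure_symmDiff_eq_zero_iff.mp h.1)
  have hP : ∀ᵐ x, ∀ i j, x ∈ P i → x ∈ P j → i = j := by
    refine ae_all_iff.mpr fun i => ae_all_iff.mpr fun j => ?_
    by_cases hij : i = j
    · exact Filter.Eventually.of_forall fun _ _ _ => hij
    · filter_upwards [measure_eq_zero_iff_ae_notMem.mp (h.2 i j hij)] with x hx hi hj
      exact absurd ⟨hi, hj⟩ hx
  filter_upwards [hA, hP] with x hxA hxP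
  exact ⟨hxA.trans mem_iUnion, hxP⟩

lemma ae_existsUnique_mem_iff_of_isAEPartition2 {ι : Type*} [AddGroup ι] [Countable ι]
    {g : ι → ℝ × ℝ → ℝ × ℝ} (hg : ∀ i, Measure.QuasiMeasurePreserving (g i) volume volume)
    (hg_zero : g 0 = id) (hg_add : ∀ i j p, g i (g j p) = g (i + j) p)
    {P : ι → Set (ℝ × ℝ)} {A B : Set (ℝ × ℝ)}
    (hA : IsAEPartition2 P A) (hB : IsAEPartition2 (fun i => g i '' P i) B) :
    ∀ᵐ p, (∃! j, g j p ∈ A) ↔ (∃! j, g j p ∈ B) := by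
  have mem_image : ∀ i j p, g j p ∈ g i '' P i ↔ g (-i + j) p ∈ P i := fun i j p => by
    rw [image_eq_preimage_of_inverse (g := g (-i))
      (fun q => by rw [hg_add, neg_add_cancel, hg_zero, id])
      (fun q => by rw [hg_add, add_neg_cancel, hg_zero, id]), mem_preimage, hg_add]
  filter_upwards [ae_all_iff.mpr fun j => (hg j).ae hA.ae_mem_iff,
    ae_all_iff.mpr fun j => (hg j).ae hB.ae_mem_iff] with p hpA hpB
  simp only [mem_image] at hpB
  rw [existsUnique_congr fun j => (hpA j).1, existsUnique_congr fun j => (hpB j).1,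
    existsUnique_exists_iff_existsUnique_prod fun j => (hpA j).2,
    existsUnique_exists_iff_existsUnique_prod fun j => (hpB j).2]
  -- the piece `P i` met at `g j p` corresponds to the piece `g i '' P i` met at `g (i + j) p`
  let e : ι × ι ≃ ι × ι :=
    { toFun := fun q => (q.2 + q.1, q.2)
      invFun := fun q => (-q.2 + q.1, q.2)
      left_inv := fun q => by simp
      right_inv := fun q => by simp }
  exact e.existsUnique_congr_left

section PairFamily

variable {ι α : Type*} [DecidableEq ι] {i j : ι} {A B : Set α}

def pairFamily (i j : ι) (A B : Set α) : ι → Set α :=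
  fun k => if k = i then A else if k = j then B else ∅

lemma iUnion_pairFamily (hij : i ≠ j) : ⋃ k, pairFamily i j A B k = A ∪ B := by
  ext x
  simp only [mem_iUnion, mem_union, pairFamily]
  constructor
  · rintro ⟨k, hk⟩
    split_ifs at hk
    exacts [Or.inl hk, Or.inr hk, hk.elim]
  · rintro (hx | hx)
    · exact ⟨i, by rwa [if_pos rfl]⟩
    · exact ⟨j, by rwa [if_neg hij.symm, if_pos rfl]⟩

lemma measurableSet_pairFamily [MeasurableSpace α] (hA : MeasurableSet A)
    (hB : MeasurableSet B) (k : ι) : MeasurableSet (pairFamily i j A B k) := by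
  unfold pairFamily
  split_ifs
  exacts [hA, hB, .empty]

lemma isAEPartition2_pairFamily {A B : Set (ℝ × ℝ)} (hij : i ≠ j) (hAB : Disjoint A B) :
    IsAEPartition2 (pairFamily i j A B) (A ∪ B) := by
  refine ⟨by rw [iUnion_pairFamily hij, symmDiff_self, bot_eq_empty, measure_empty],
    fun k l hkl => ?_⟩
  have : pairFamily i j A B k ∩ pairFamily i j A B l = ∅ := by
    unfold pairFamily
    split_ifs <;> simp_all [hAB.inter_eq, hAB.symm.inter_eq]
  rw [this, measure_empty]

lemma isAEPartition2_image_pairFamily {A B C : Set (ℝ × ℝ)} (f : ι → ℝ × ℝ → ℝ × ℝ)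
    (h : IsAEPartition2 (pairFamily i j (f i '' A) (f j '' B)) C) :
    IsAEPartition2 (fun k => f k '' pairFamily i j A B k) C := by
  convert h using 2 with k
  unfold pairFamily
  split_ifs with hi hj
  · rw [hi]
  · rw [hj]
  · exact image_empty _

end PairFamily

def transl (m : ℤ × ℤ) (p : ℝ × ℝ) : ℝ × ℝ := (p.1 + 2 * π * m.1, p.2 + 2 * π * m.2)

def dil (k : ℤ) (p : ℝ × ℝ) : ℝ × ℝ := ((2 : ℝ) ^ k * p.1, (2 : ℝ) ^ k * p.2)

def reflX (p : ℝ × ℝ) : ℝ × ℝ := (-p.1, p.2)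

def reflY (p : ℝ × ℝ) : ℝ × ℝ := (p.1, -p.2)

def baseSquare : Set (ℝ × ℝ) := Ico 0 π ×ˢ Ico 0 π

def lShape : Set (ℝ × ℝ) := baseSquare \ Ico 0 (π / 2) ×ˢ Ico 0 (π / 2)

def shift2Pi (p : ℝ × ℝ) : ℝ × ℝ := (p.1 + 2 * π, p.2 + 2 * π)

lemma transl_zero : transl 0 = id := by
  funext p
  simp [transl]

lemma transl_transl (m m' : ℤ × ℤ) (p : ℝ × ℝ) :
    transl m (transl m' p) = transl (m + m') p := by
  simp only [transl, Prod.fst_add, Prod.snd_add, Int.cast_add]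
  ext <;> ring

lemma quasiMeasurePreserving_transl (m : ℤ × ℤ) :
    Measure.QuasiMeasurePreserving (transl m) volume volume :=
  (measurePreserving_add_right volume
    ((2 * π * m.1 : ℝ), (2 * π * m.2 : ℝ))).quasiMeasurePreserving

lemma dil_zero : dil 0 = id := by
  funext p
  simp [dil]

lemma dil_dil (k k' : ℤ) (p : ℝ × ℝ) : dil k (dil k' p) = dil (k + k') p := by
  simp only [dil, zpow_add₀ (two_ne_zero' ℝ)]
  ext <;> ring

lemma quasiMeasurePreserving_dil (k : ℤ) :
    Measure.QuasiMeasurePreserving (dil k) volume volume :=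
  Measure.quasiMeasurePreserving_smul volume (zpow_ne_zero k two_ne_zero)

lemma reflX_involutive : Function.Involutive reflX := fun p => by simp [reflX]

lemma reflY_involutive : Function.Involutive reflY := fun p => by simp [reflY]

lemma measurePreserving_reflX : MeasurePreserving reflX volume volume :=
  (Measure.measurePreserving_neg volume).prod (MeasurePreserving.id volume)

lemma measurePreserving_reflY : MeasurePreserving reflY volume volume :=
  (MeasurePreserving.id volume).prod (Measure.measurePreserving_neg volume)

lemma reflX_transl (m : ℤ × ℤ) (p : ℝ × ℝ) :
    reflX (transl m p) = transl ((Equiv.neg ℤ).prodCongr (Equiv.refl ℤ) m) (reflX p) := by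
  simp only [reflX, transl, Equiv.prodCongr_apply, Prod.map, Equiv.neg_apply, Equiv.refl_apply,
    Int.cast_neg]
  ext <;> ring

lemma reflY_transl (m : ℤ × ℤ) (p : ℝ × ℝ) :
    reflY (transl m p) = transl ((Equiv.refl ℤ).prodCongr (Equiv.neg ℤ) m) (reflY p) := by
  simp only [reflY, transl, Equiv.prodCongr_apply, Prod.map, Equiv.neg_apply, Equiv.refl_apply,
    Int.cast_neg]
  ext <;> ring

lemma reflX_dil (k : ℤ) (p : ℝ × ℝ) : reflX (dil k p) = dil k (reflX p) := by
  simp [reflX, dil]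

lemma reflY_dil (k : ℤ) (p : ℝ × ℝ) : reflY (dil k p) = dil k (reflY p) := by
  simp [reflY, dil]

lemma ae_fst_notMem_and_snd_notMem {C : Set ℝ} (hC : C.Countable) :
    ∀ᵐ p : ℝ × ℝ, p.1 ∉ C ∧ p.2 ∉ C :=
  (Measure.quasiMeasurePreserving_fst.ae (hC.ae_notMem volume)).and
    (Measure.quasiMeasurePreserving_snd.ae (hC.ae_notMem volume))

lemma transCongruent2_union {m m' : ℤ × ℤ} (hmm' : m ≠ m') {A B : Set (ℝ × ℝ)}
    (hA : MeasurableSet A) (hB : MeasurableSet B) (hAB : Disjoint A B)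
    (hAB' : Disjoint (transl m '' A) (transl m' '' B)) :
    TransCongruent2 (A ∪ B) (transl m '' A ∪ transl m' '' B) :=
  ⟨_, measurableSet_pairFamily hA hB, isAEPartition2_pairFamily hmm' hAB,
    isAEPartition2_image_pairFamily transl (isAEPartition2_pairFamily hmm' hAB')⟩

lemma dilCongruent2_union {k k' : ℤ} (hkk' : k ≠ k') {A B : Set (ℝ × ℝ)}
    (hA : MeasurableSet A) (hB : MeasurableSet B) (hAB : Disjoint A B)
    (hAB' : Disjoint (dil k '' A) (dil k' '' B)) :
    DilCongruent2 (A ∪ B) (dil k '' A ∪ dil k' '' B) :=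
  ⟨_, measurableSet_pairFamily hA hB, isAEPartition2_pairFamily hkk' hAB,
    isAEPartition2_image_pairFamily dil (isAEPartition2_pairFamily hkk' hAB')⟩

lemma ae_existsUnique_mem_four_corners {ι : Type*} {g : ι → ℝ × ℝ → ℝ × ℝ} {ex ey : ι ≃ ι}
    (hx : ∀ j q, reflX (g j q) = g (ex j) (reflX q))
    (hy : ∀ j q, reflY (g j q) = g (ey j) (reflY q)) {H : ℝ → Prop} {W : Set (ℝ × ℝ)}
    (hH : ∀ᵐ p : ℝ × ℝ, (H (-p.1) ↔ ¬H p.1) ∧ (H (-p.2) ↔ ¬H p.2))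
    (hW : ∀ᵐ q : ℝ × ℝ, OrbitHitsIff g W q (H q.1 ∧ H q.2)) :
    ∀ᵐ p : ℝ × ℝ, ∃! j, g j p ∈ W ∪ reflX '' W ∪ reflY '' (W ∪ reflX '' W) := by
  filter_upwards [hH, hW, measurePreserving_reflX.quasiMeasurePreserving.ae hW,
    measurePreserving_reflY.quasiMeasurePreserving.ae hW,
    (measurePreserving_reflX.comp measurePreserving_reflY).quasiMeasurePreserving.ae hW]
    with p ⟨hp₁, hp₂⟩ h hX hY hXY
  -- exactly one of `H p.1` and `H (-p.1)` holds, so only the second coordinate matters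
  have symm_x : ∀ {q : ℝ × ℝ} {b : Prop}, OrbitHitsIff g W q (H p.1 ∧ b) →
      OrbitHitsIff g W (reflX q) (H (-p.1) ∧ b) → OrbitHitsIff g (W ∪ reflX '' W) q b :=
    fun h h' => by
      have := h.union (h'.image reflX_involutive ex hx) (by tauto)
      exact ⟨this.1, this.2.trans (by tauto)⟩
  have hWXY := (symm_x h hX).union ((symm_x hY hXY).image reflY_involutive ey hy) (by tauto)
  exact hWXY.existsUnique (by tauto)

-- `x mod 2π ∈ [0, π)`
def InLowerHalfPeriod (x : ℝ) : Prop := Int.fract (x / (2 * π)) < 1 / 2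

lemma existsUnique_add_intCast_mem_Ico_iff {t d : ℝ} (hd : d ≤ 1) :
    (∃! n : ℤ, t + n ∈ Ico 0 d) ↔ Int.fract t < d := by
  have key : ∀ n : ℤ, t + n ∈ Ico 0 d ↔ n = -⌊t⌋ ∧ Int.fract t < d := by
    intro n
    rw [← Int.self_sub_floor]
    constructor
    · intro h
      have hfloor : ⌊t + n⌋ = 0 := Int.floor_eq_zero_iff.mpr ⟨h.1, h.2.trans_le hd⟩
      rw [Int.floor_add_intCast] at hfloor
      obtain rfl : n = -⌊t⌋ := by omega
      refine ⟨rfl, ?_⟩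
      simpa [sub_eq_add_neg] using h.2
    · rintro ⟨rfl, h⟩
      rw [Int.cast_neg, ← sub_eq_add_neg]
      exact ⟨Int.self_sub_floor t ▸ Int.fract_nonneg t, h⟩
  simp only [key]
  exact ⟨fun ⟨_, ⟨_, h⟩, _⟩ => h, fun h => ⟨_, ⟨rfl, h⟩, fun _ h' => h'.1⟩⟩

lemma existsUnique_add_two_pi_mul_mem_Ico_iff (x : ℝ) :
    (∃! n : ℤ, x + 2 * π * n ∈ Ico 0 π) ↔ InLowerHalfPeriod x := by
  have h2π : 0 < 2 * π := by positivity
  have hscale : ∀ n : ℤ, x + 2 * π * n ∈ Ico 0 π ↔ x / (2 * π) + n ∈ Ico 0 (1 / 2) := by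
    intro n
    rw [show x / (2 * π) + n = (x + 2 * π * n) / (2 * π) by field_simp, mem_Ico, mem_Ico,
      le_div_iff₀ h2π, div_lt_iff₀ h2π, zero_mul, show 1 / 2 * (2 * π) = π by ring]
  rw [existsUnique_congr hscale, existsUnique_add_intCast_mem_Ico_iff (by norm_num)]
  rfl

lemma existsUnique_transl_mem_baseSquare_iff (q : ℝ × ℝ) :
    (∃! m : ℤ × ℤ, transl m q ∈ baseSquare) ↔
      InLowerHalfPeriod q.1 ∧ InLowerHalfPeriod q.2 := by
  rw [← existsUnique_add_two_pi_mul_mem_Ico_iff, ← existsUnique_add_two_pi_mul_mem_Ico_iff]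
  exact existsUnique_prod_and_iff (C₁ := fun n : ℤ => q.1 + 2 * π * n ∈ Ico 0 π)
    (C₂ := fun n : ℤ => q.2 + 2 * π * n ∈ Ico 0 π)

lemma inLowerHalfPeriod_add_two_pi_mul (x : ℝ) (n : ℤ) :
    InLowerHalfPeriod (x + 2 * π * n) ↔ InLowerHalfPeriod x := by
  rw [InLowerHalfPeriod, InLowerHalfPeriod,
    show (x + 2 * π * n) / (2 * π) = x / (2 * π) + n by field_simp, Int.fract_add_intCast]

lemma inLowerHalfPeriod_of_mem_Ico {x : ℝ} (hx : x ∈ Ico 0 π) : InLowerHalfPeriod x := by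
  have h2π : 0 < 2 * π := by positivity
  have hx' : x / (2 * π) < 1 / 2 := by
    rw [div_lt_iff₀ h2π]
    linarith [hx.2]
  rw [InLowerHalfPeriod, Int.fract_eq_self.mpr ⟨div_nonneg hx.1 h2π.le, by linarith⟩]
  exact hx'

lemma inLowerHalfPeriod_neg_iff {x : ℝ} (hx : x ∉ range fun n : ℤ => π * n) :
    InLowerHalfPeriod (-x) ↔ ¬InLowerHalfPeriod x := by
  have hx' : ∀ n : ℤ, x / (2 * π) ≠ n / 2 := fun n h =>
    hx ⟨n, by field_simp at h; linarith⟩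
  have h0 : Int.fract (x / (2 * π)) ≠ 0 := fun h => by
    obtain ⟨n, hn⟩ := Int.fract_eq_zero_iff.mp h
    exact hx' (2 * n) (by push_cast; rw [← hn]; ring)
  have hhalf : Int.fract (x / (2 * π)) ≠ 1 / 2 := fun h => by
    refine hx' (2 * ⌊x / (2 * π)⌋ + 1) ?_
    rw [← Int.self_sub_floor] at h
    push_cast
    linarith
  rw [InLowerHalfPeriod, InLowerHalfPeriod, neg_div, Int.fract_neg h0]
  have := Int.fract_lt_one (x / (2 * π))
  constructor
  · intro h h'
    linarith
  · intro h
    linarith [lt_of_le_of_ne (not_lt.mp h) (Ne.symm hhalf)]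

lemma mem_lShape_iff {q : ℝ × ℝ} (h₁ : 0 ≤ q.1) (h₂ : 0 ≤ q.2) :
    q ∈ lShape ↔ max q.1 q.2 ∈ Ico (π / 2) π := by
  simp only [lShape, baseSquare, mem_sdiff, mem_prod, mem_Ico, max_lt_iff, le_max_iff, h₁, h₂,
    true_and, not_and_or, not_lt]
  tauto

lemma existsUnique_two_zpow_mul_mem_Ico {c M : ℝ} (hc : 0 < c) (hM : 0 < M) :
    ∃! k : ℤ, (2 : ℝ) ^ k * M ∈ Ico c (2 * c) := by
  have le_of_mem : ∀ k k' : ℤ, (2 : ℝ) ^ k * M ∈ Ico c (2 * c) →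
      (2 : ℝ) ^ k' * M ∈ Ico c (2 * c) → k ≤ k' := by
    intro k k' hk hk'
    by_contra! hlt
    have h2 : (2 : ℝ) ^ (k' + 1) ≤ 2 ^ k := zpow_le_zpow_right₀ one_le_two hlt
    rw [zpow_add_one₀ two_ne_zero] at h2
    nlinarith [hk.2, hk'.1]
  obtain ⟨n, hn₁, hn₂⟩ := exists_mem_Ico_zpow (div_pos hM hc) one_lt_two
  rw [le_div_iff₀ hc] at hn₁
  rw [div_lt_iff₀ hc, zpow_add_one₀ two_ne_zero] at hn₂
  have h2n : (0 : ℝ) < 2 ^ n := zpow_pos two_pos n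
  have hk : (2 : ℝ) ^ (-n) * M ∈ Ico c (2 * c) := by
    rw [zpow_neg, ← div_eq_inv_mul, mem_Ico, le_div_iff₀ h2n, div_lt_iff₀ h2n]
    constructor <;> nlinarith
  exact ⟨-n, hk, fun k hk' => le_antisymm (le_of_mem _ _ hk' hk) (le_of_mem _ _ hk hk')⟩

lemma existsUnique_dil_mem_lShape {q : ℝ × ℝ} (h₁ : 0 < q.1) (h₂ : 0 < q.2) :
    ∃! k : ℤ, dil k q ∈ lShape := by
  have hmem : ∀ k : ℤ,
      dil k q ∈ lShape ↔ (2 : ℝ) ^ k * max q.1 q.2 ∈ Ico (π / 2) (2 * (π / 2)) := by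
    intro k
    have h2k : (0 : ℝ) < 2 ^ k := zpow_pos two_pos k
    rw [mem_lShape_iff (by simp only [dil]; positivity) (by simp only [dil]; positivity),
      show 2 * (π / 2) = π by ring, mul_max_of_nonneg _ _ h2k.le]
    rfl
  rw [existsUnique_congr hmem]
  exact existsUnique_two_zpow_mul_mem_Ico (by positivity) (lt_max_of_lt_left h₁)

lemma pos_of_dil_mem {V : Set (ℝ × ℝ)} (hV : V ⊆ {q | 0 ≤ q.1 ∧ 0 ≤ q.2}) {q : ℝ × ℝ}
    (h₁ : q.1 ≠ 0) (h₂ : q.2 ≠ 0) {k : ℤ} (hk : dil k q ∈ V) : 0 < q.1 ∧ 0 < q.2 := by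
  have h2k : (0 : ℝ) < 2 ^ k := zpow_pos two_pos k
  obtain ⟨hk₁, hk₂⟩ := hV hk
  exact ⟨((mul_nonneg_iff_of_pos_left h2k).mp hk₁).lt_of_ne' h₁,
    ((mul_nonneg_iff_of_pos_left h2k).mp hk₂).lt_of_ne' h₂⟩

lemma ae_orbitHitsIff_dil {W : Set (ℝ × ℝ)} (hW : W ⊆ {q | 0 ≤ q.1 ∧ 0 ≤ q.2})
    (hDC : DilCongruent2 W lShape) :
    ∀ᵐ q : ℝ × ℝ, OrbitHitsIff dil W q (0 < q.1 ∧ 0 < q.2) := by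
  obtain ⟨P, -, hPW, hPQ⟩ := hDC
  have hQ' : lShape ⊆ {q | 0 ≤ q.1 ∧ 0 ≤ q.2} := fun q hq => ⟨hq.1.1.1, hq.1.2.1⟩
  filter_upwards [ae_existsUnique_mem_iff_of_isAEPartition2 quasiMeasurePreserving_dil dil_zero
    dil_dil hPW hPQ, ae_fst_notMem_and_snd_notMem (countable_singleton 0)] with q hq ⟨h₁, h₂⟩
  refine orbitHitsIff_of_existsUnique_iff (hq.trans ⟨fun ⟨_, hk, _⟩ => pos_of_dil_mem hQ' h₁ h₂ hk,
    fun h => existsUnique_dil_mem_lShape h.1 h.2⟩) fun ⟨_, hk⟩ => pos_of_dil_mem hW h₁ h₂ hk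

lemma ae_neg_pos_iff : ∀ᵐ p : ℝ × ℝ, (0 < -p.1 ↔ ¬0 < p.1) ∧ (0 < -p.2 ↔ ¬0 < p.2) := by
  filter_upwards [ae_fst_notMem_and_snd_notMem (countable_singleton 0)] with p ⟨h₁, h₂⟩
  rw [neg_pos, neg_pos, not_lt, not_lt]
  exact ⟨(Ne.le_iff_lt h₁).symm, (Ne.le_iff_lt h₂).symm⟩

lemma ae_orbitHitsIff_transl {W : Set (ℝ × ℝ)}
    (hW : W ⊆ {q | InLowerHalfPeriod q.1 ∧ InLowerHalfPeriod q.2})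
    (hTC : TransCongruent2 W baseSquare) :
    ∀ᵐ q : ℝ × ℝ, OrbitHitsIff transl W q (InLowerHalfPeriod q.1 ∧ InLowerHalfPeriod q.2) := by
  obtain ⟨P, -, hPW, hPQ⟩ := hTC
  filter_upwards [ae_existsUnique_mem_iff_of_isAEPartition2 quasiMeasurePreserving_transl
    transl_zero transl_transl hPW hPQ] with q hq
  refine orbitHitsIff_of_existsUnique_iff (hq.trans (existsUnique_transl_mem_baseSquare_iff q)) ?_
  rintro ⟨m, hm⟩
  simpa only [transl, mem_ofPred_eq, inLowerHalfPeriod_add_two_pi_mul] using hW hm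

lemma inLowerHalfPeriod_and_nonneg_of_mem_lShape_union {q : ℝ × ℝ}
    (hq : q ∈ lShape ∪ shift2Pi '' baseSquare) :
    (InLowerHalfPeriod q.1 ∧ InLowerHalfPeriod q.2) ∧ 0 ≤ q.1 ∧ 0 ≤ q.2 := by
  rcases hq with ⟨⟨hq₁, hq₂⟩, -⟩ | ⟨q, ⟨hq₁, hq₂⟩, rfl⟩
  · exact ⟨⟨inLowerHalfPeriod_of_mem_Ico hq₁, inLowerHalfPeriod_of_mem_Ico hq₂⟩, hq₁.1, hq₂.1⟩
  · have hshift : ∀ x, InLowerHalfPeriod (x + 2 * π) ↔ InLowerHalfPeriod x := fun x => by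
      simpa using inLowerHalfPeriod_add_two_pi_mul x 1
    refine ⟨⟨(hshift _).2 (inLowerHalfPeriod_of_mem_Ico hq₁),
      (hshift _).2 (inLowerHalfPeriod_of_mem_Ico hq₂)⟩, ?_, ?_⟩ <;>
    · simp only [shift2Pi]
      linarith [hq₁.1, hq₂.1, Real.pi_pos]

lemma ae_inLowerHalfPeriod_neg_iff :
    ∀ᵐ p : ℝ × ℝ, (InLowerHalfPeriod (-p.1) ↔ ¬InLowerHalfPeriod p.1) ∧
      (InLowerHalfPeriod (-p.2) ↔ ¬InLowerHalfPeriod p.2) := by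
  filter_upwards [ae_fst_notMem_and_snd_notMem (countable_range fun n : ℤ => π * n)] with p hp
  exact ⟨inLowerHalfPeriod_neg_iff hp.1, inLowerHalfPeriod_neg_iff hp.2⟩

def cornerSeq (n : ℕ) : ℝ := 2 * π / 3 - 2 * π / 3 / 4 ^ n

lemma cornerSeq_zero : cornerSeq 0 = 0 := by simp [cornerSeq]

lemma cornerSeq_one : cornerSeq 1 = π / 2 := by
  rw [cornerSeq]
  ring

lemma cornerSeq_succ (n : ℕ) : cornerSeq (n + 1) = 4⁻¹ * (cornerSeq n + 2 * π) := by
  rw [cornerSeq, cornerSeq, pow_succ]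
  field_simp
  ring

lemma cornerSeq_mono : Monotone cornerSeq := fun m n hmn => by
  unfold cornerSeq
  gcongr
  norm_num

lemma cornerSeq_lt_pi (n : ℕ) : cornerSeq n < π := by
  have : 0 < 2 * π / 3 / 4 ^ n := by positivity
  rw [cornerSeq]
  linarith [Real.pi_pos]

def diagSquare (n : ℕ) : Set (ℝ × ℝ) :=
  Ico (cornerSeq n) (cornerSeq (n + 1)) ×ˢ Ico (cornerSeq n) (cornerSeq (n + 1))

def diagSquares : Set (ℝ × ℝ) := ⋃ n, diagSquare n

def fourCornersPiece : Set (ℝ × ℝ) := (baseSquare \ diagSquares) ∪ shift2Pi '' diagSquares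

lemma diagSquares_subset_baseSquare : diagSquares ⊆ baseSquare := by
  refine iUnion_subset fun n => ?_
  have hIco : Ico (cornerSeq n) (cornerSeq (n + 1)) ⊆ Ico 0 π :=
    Ico_subset_Ico (cornerSeq_zero ▸ cornerSeq_mono n.zero_le) (cornerSeq_lt_pi _).le
  exact prod_mono hIco hIco

lemma measurableSet_diagSquares : MeasurableSet diagSquares :=
  .iUnion fun _ => measurableSet_Ico.prod measurableSet_Ico

lemma diagSquares_sdiff_diagSquare_zero :
    diagSquares \ diagSquare 0 = ⋃ n, diagSquare (n + 1) := by
  have hdisj : Disjoint (⋃ n, diagSquare (n + 1)) (diagSquare 0) := by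
    refine disjoint_iUnion_left.mpr fun n => disjoint_left.mpr fun q hq hq0 => ?_
    have := cornerSeq_mono (Nat.le_add_left 1 n)
    linarith [hq.1.1, hq0.1.2]
  rw [diagSquares, ← union_iUnion_nat_succ, union_sdiff_left, hdisj.sdiff_eq_left]

lemma lShape_eq : lShape = (baseSquare \ diagSquares) ∪ ⋃ n, diagSquare (n + 1) := by
  rw [← diagSquares_sdiff_diagSquare_zero,
    sdiff_union_sdiff_cancel diagSquares_subset_baseSquare (subset_iUnion diagSquare 0),
    lShape, diagSquare, zero_add, cornerSeq_zero, cornerSeq_one]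

lemma transl_image_shift2Pi (s : Set (ℝ × ℝ)) : transl (-1, -1) '' (shift2Pi '' s) = s := by
  have : ∀ p, transl (-1, -1) (shift2Pi p) = p := fun p => by
    simp only [transl, shift2Pi]
    ext <;> push_cast <;> ring
  simp only [image_image, this, image_id']

lemma dil_image_shift2Pi_diagSquares :
    dil (-2) '' (shift2Pi '' diagSquares) = ⋃ n, diagSquare (n + 1) := by
  have hIco : ∀ a b : ℝ, (fun x => 4⁻¹ * (x + 2 * π)) '' Ico a b =
      Ico (4⁻¹ * (a + 2 * π)) (4⁻¹ * (b + 2 * π)) := fun a b => by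
    rw [← image_image (4⁻¹ * ·) (· + 2 * π), image_add_const_Ico,
      image_mul_left_Ico (by norm_num)]
  have hmap : (fun p => dil (-2) (shift2Pi p)) =
      Prod.map (fun x => 4⁻¹ * (x + 2 * π)) (fun x => 4⁻¹ * (x + 2 * π)) := by
    funext p
    simp only [dil, shift2Pi, Prod.map]
    norm_num
  simp only [diagSquares, diagSquare, image_iUnion, image_image, hmap, prodMap_image_prod, hIco,
    cornerSeq_succ]

lemma measurableSet_baseSquare_sdiff_diagSquares : MeasurableSet (baseSquare \ diagSquares) :=
  (measurableSet_Ico.prod measurableSet_Ico).diff measurableSet_diagSquares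

lemma measurableSet_shift2Pi_image_diagSquares : MeasurableSet (shift2Pi '' diagSquares) :=
  (measurableEmbedding_addRight ((2 * π, 2 * π) : ℝ × ℝ)).measurableSet_image.mpr
    measurableSet_diagSquares

lemma disjoint_sdiff_diagSquares_shift2Pi :
    Disjoint (baseSquare \ diagSquares) (shift2Pi '' diagSquares) := by
  refine disjoint_left.mpr fun q hq ⟨p, hp, hpq⟩ => ?_
  have hp₁ := (diagSquares_subset_baseSquare hp).1.1
  have hq₁ := hq.1.1.2
  rw [← hpq, shift2Pi] at hq₁
  linarith [Real.pi_pos]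

lemma fourCornersPiece_subset : fourCornersPiece ⊆ lShape ∪ shift2Pi '' baseSquare :=
  union_subset_union (lShape_eq ▸ subset_union_left) (image_mono diagSquares_subset_baseSquare)

lemma transCongruent2_fourCornersPiece : TransCongruent2 fourCornersPiece baseSquare := by
  have h := transCongruent2_union (m := 0) (m' := (-1, -1)) (by decide)
    measurableSet_baseSquare_sdiff_diagSquares measurableSet_shift2Pi_image_diagSquares
    disjoint_sdiff_diagSquares_shift2Pi
    (by rw [transl_zero, image_id, transl_image_shift2Pi]; exact disjoint_sdiff_left)
  rwa [transl_zero, image_id, transl_image_shift2Pi,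
    sdiff_union_of_subset diagSquares_subset_baseSquare] at h

lemma dilCongruent2_fourCornersPiece : DilCongruent2 fourCornersPiece lShape := by
  have hsub : (⋃ n, diagSquare (n + 1)) ⊆ diagSquares :=
    iUnion_subset fun n => subset_iUnion _ _
  have h := dilCongruent2_union (k := 0) (k' := -2) (by decide)
    measurableSet_baseSquare_sdiff_diagSquares measurableSet_shift2Pi_image_diagSquares
    disjoint_sdiff_diagSquares_shift2Pi
    (by rw [dil_zero, image_id, dil_image_shift2Pi_diagSquares]
        exact disjoint_sdiff_left.mono_right hsub)
  rwa [dil_zero, image_id, dil_image_shift2Pi_diagSquares, ← lShape_eq] at h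

lemma union_reflections_eq (W : Set (ℝ × ℝ)) :
    W ∪ (fun p : ℝ × ℝ => (-p.1, p.2)) '' W ∪ (fun p : ℝ × ℝ => (-p.1, -p.2)) '' W ∪
      (fun p : ℝ × ℝ => (p.1, -p.2)) '' W = W ∪ reflX '' W ∪ reflY '' (W ∪ reflX '' W) := by
  rw [image_union, image_image, union_comm (reflY '' W), ← union_assoc]
  rfl

lemma MeasurableSet.union_reflections {W : Set (ℝ × ℝ)} (hW : MeasurableSet W) :
    MeasurableSet (W ∪ reflX '' W ∪ reflY '' (W ∪ reflX '' W)) := by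
  rw [reflX_involutive.image_eq_preimage_symm, reflY_involutive.image_eq_preimage_symm]
  have hWX := hW.union (measurePreserving_reflX.measurable hW)
  exact hWX.union (measurePreserving_reflY.measurable hWX)

/-- Example 11 of the paper; the "four corners set".  With
`Q = [0, π) × [0, π)` and `Q' = Q ∖ ([0, π/2) × [0, π/2))`, there is a measurable set
`W₁ ⊆ Q' ∪ (Q + (2π, 2π))` that is `2πℤ²`-translation congruent to `Q` and
`2`-dilation congruent to `Q'`; and for any such `W₁`, the union of `W₁` with its
reflections in the two coordinate axes and the origin is a wavelet set in `ℝ²` for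
dilation `2I`. -/
theorem stmt_17 :
    (∃ W₁ : Set (ℝ × ℝ), MeasurableSet W₁ ∧
      W₁ ⊆ (Ico 0 π ×ˢ Ico 0 π \ Ico 0 (π / 2) ×ˢ Ico 0 (π / 2)) ∪
        ((fun p : ℝ × ℝ => (p.1 + 2 * π, p.2 + 2 * π)) '' (Ico 0 π ×ˢ Ico 0 π)) ∧
      TransCongruent2 W₁ (Ico 0 π ×ˢ Ico 0 π) ∧
      DilCongruent2 W₁ (Ico 0 π ×ˢ Ico 0 π \ Ico 0 (π / 2) ×ˢ Ico 0 (π / 2))) ∧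
    (∀ W₁ : Set (ℝ × ℝ), MeasurableSet W₁ →
      W₁ ⊆ (Ico 0 π ×ˢ Ico 0 π \ Ico 0 (π / 2) ×ˢ Ico 0 (π / 2)) ∪
        ((fun p : ℝ × ℝ => (p.1 + 2 * π, p.2 + 2 * π)) '' (Ico 0 π ×ˢ Ico 0 π)) →
      TransCongruent2 W₁ (Ico 0 π ×ˢ Ico 0 π) →
      DilCongruent2 W₁ (Ico 0 π ×ˢ Ico 0 π \ Ico 0 (π / 2) ×ˢ Ico 0 (π / 2)) →
      IsWaveletSet2
        (W₁ ∪ (fun p : ℝ × ℝ => (-p.1, p.2)) '' W₁ ∪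
          (fun p : ℝ × ℝ => (-p.1, -p.2)) '' W₁ ∪
          (fun p : ℝ × ℝ => (p.1, -p.2)) '' W₁)) := by
  refine ⟨⟨fourCornersPiece, measurableSet_baseSquare_sdiff_diagSquares.union
    measurableSet_shift2Pi_image_diagSquares, fourCornersPiece_subset,
    transCongruent2_fourCornersPiece, dilCongruent2_fourCornersPiece⟩, ?_⟩
  intro W hW hsub hTC hDC
  have hregion := fun q (hq : q ∈ W) =>
    inLowerHalfPeriod_and_nonneg_of_mem_lShape_union (hsub hq)
  rw [union_reflections_eq]
  exact ⟨hW.union_reflections,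
    ae_existsUnique_mem_four_corners reflX_transl reflY_transl ae_inLowerHalfPeriod_neg_iff
      (ae_orbitHitsIff_transl (fun q hq => (hregion q hq).1) hTC),
    ae_existsUnique_mem_four_corners (ex := Equiv.refl ℤ) (ey := Equiv.refl ℤ)
      reflX_dil reflY_dil ae_neg_pos_iff (ae_orbitHitsIff_dil (fun q hq => (hregion q hq).2) hDC)⟩
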